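/- Consider the Kripke-style model M with three worlds W = {⊥, α, β}, ⊥ ≤ α, ⊥ ≤ β (and ≤ otherwise reflexive), domain D(w) = {{α}, {β}} for all worlds w, and valuation g(Y) = {α}, g(Z) = {β}. Then in M, the bottom world forces ∀X.(Y⊃X)⊃(Z⊃X)⊃X but does not force Y∨Z. -/
import Mathlib


/-!
Statement 3: a concrete three-world Kripke-style (Sobolev) model in which the
bottom world forces `∀X.(Y⊃X)⊃(Z⊃X)⊃X` but does not force `Y∨Z`.
-/

/-- Formulas: variables, ⊃, ∨, ∀. -/
inductive Fm : Type
  | var : ℕ → Fm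
  | imp : Fm → Fm → Fm
  | or  : Fm → Fm → Fm
  | all : ℕ → Fm → Fm
deriving DecidableEq

/-- The three worlds `⊥`, `α`, `β`. -/
inductive W : Type
  | bot : W
  | a : W
  | b : W
deriving DecidableEq

/-- The partial order on worlds: reflexive, with `⊥ ≤ α` and `⊥ ≤ β`. -/
def W.le : W → W → Prop := fun x y => x = y ∨ x = W.bot

/-- The (constant) domain function: at each world the available
upward-closed sets are `{α}` and `{β}`. -/
def D : Set (Set W) := {s | s = {W.a} ∨ s = {W.b}}

/-- Forcing in the model: standard clauses for variables, ⊃ and ∨;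
`w ⊩ ∀X.A` iff for all `w' ≥ w` and all `a ∈ D`, `w' ⊩_{g[X↦a]} A`. -/
def Force : Fm → (ℕ → Set W) → W → Prop
  | .var n, g, w => w ∈ g n
  | .imp A B, g, w => ∀ w', W.le w w' → Force A g w' → Force B g w'
  | .or A B, g, w => Force A g w ∨ Force B g w
  | .all X A, g, w => ∀ w', W.le w w' → ∀ s ∈ D, Force A (Function.update g X s) w'

/-- In the model with worlds `{⊥,α,β}`, `⊥ ≤ α, β`, domains `{{α},{β}}`
everywhere, and any valuation `g` into the domains with `g Y = {α}` and
`g Z = {β}`, the bottom world forces `∀X.(Y⊃X)⊃(Z⊃X)⊃X` but does not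
force `Y ∨ Z`. -/
theorem model_forces_rp_or_but_not_or (X Y Z : ℕ)
    (hXY : X ≠ Y) (hXZ : X ≠ Z) (hYZ : Y ≠ Z)
    (g : ℕ → Set W) (hgY : g Y = {W.a}) (hgZ : g Z = {W.b})
    (hg : ∀ n, g n ∈ D) :
    Force (.all X (.imp (.imp (.var Y) (.var X))
        (.imp (.imp (.var Z) (.var X)) (.var X)))) g W.bot ∧
      ¬ Force (.or (.var Y) (.var Z)) g W.bot := by
  constructor
  · intro w' _ s hs w1 hw1 h1 w2 hw2 h2
    have hupY : Function.update g X s Y = {W.a} := by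
      rw [Function.update_of_ne (Ne.symm hXY)]; exact hgY
    have hupZ : Function.update g X s Z = {W.b} := by
      rw [Function.update_of_ne (Ne.symm hXZ)]; exact hgZ
    have hupX : Function.update g X s X = s := Function.update_self X s g
    simp only [Force, hupX, hupY, hupZ] at *
    rcases hs with rfl | rfl
    · rcases w2 with _ | _ | _
      · exact absurd (h2 W.b (Or.inr rfl) rfl) (by simp)
      · rfl
      · exact absurd (h2 W.b (Or.inl rfl) rfl) (by simp)
    · have hw1a : W.le w1 W.a ∨ w2 = W.b := by
        rcases w2 with _ | _ | _
        · rcases hw2 with rfl | rfl <;> exact Or.inl (Or.inr rfl)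
        · rcases hw2 with rfl | rfl
          · exact Or.inl (Or.inl rfl)
          · exact Or.inl (Or.inr rfl)
        · exact Or.inr rfl
      rcases hw1a with h | rfl
      · exact absurd (h1 W.a h rfl) (by simp)
      · rfl
  · rintro (h | h)
    · simp only [Force, hgY] at h; exact absurd h (by simp)
    · simp only [Force, hgZ] at h; exact absurd h (by simp)
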